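/- Let (A, U_A), (B, U_B), (C, U_C) be uniform groupoids, S ∈ U_{A⊸B} and T ∈ U_{B⊸C}. Then the composition T ⊙ S belongs to U_{A⊸C}. -/

import Mathlib

open CategoryTheory

universe u

namespace ThinSpan

variable {S T B : Type u} [Groupoid.{u} S] [Groupoid.{u} T] [Groupoid.{u} B]

/-- The (strict) pullback groupoid of a cospan of groupoids: objects are pairs
`(s, t)` with `f.obj s = g.obj t`. -/
structure PB (f : S ⥤ B) (g : T ⥤ B) : Type u where
  s : S
  t : T
  eq : f.obj s = g.obj t

namespace PB

variable {f : S ⥤ B} {g : T ⥤ B}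

/-- Morphisms of the pullback groupoid: pairs `(φ, ψ)` with `f.map φ = g.map ψ`
(modulo the identifications of the endpoints). -/
@[ext]
structure Hom (x y : PB f g) : Type u where
  l : x.s ⟶ y.s
  r : x.t ⟶ y.t
  comm : f.map l ≫ eqToHom y.eq = eqToHom x.eq ≫ g.map r

instance category : Category.{u} (PB f g) where
  Hom := Hom
  id x := ⟨𝟙 x.s, 𝟙 x.t, by simp⟩
  comp u v := ⟨u.l ≫ v.l, u.r ≫ v.r, by
    rw [Functor.map_comp, Functor.map_comp, Category.assoc, v.comm, ← Category.assoc,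
      u.comm, Category.assoc]⟩
  id_comp u := by apply Hom.ext <;> simp
  comp_id u := by apply Hom.ext <;> simp
  assoc u v w := by apply Hom.ext <;> simp

@[simp] theorem id_l (x : PB f g) : (𝟙 x : Hom x x).l = 𝟙 x.s := rfl
@[simp] theorem id_r (x : PB f g) : (𝟙 x : Hom x x).r = 𝟙 x.t := rfl
@[simp] theorem comp_l {x y z : PB f g} (u : x ⟶ y) (v : y ⟶ z) :
    (u ≫ v : Hom x z).l = u.l ≫ v.l := rfl
@[simp] theorem comp_r {x y z : PB f g} (u : x ⟶ y) (v : y ⟶ z) :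
    (u ≫ v : Hom x z).r = u.r ≫ v.r := rfl

instance groupoid : Groupoid.{u} (PB f g) where
  inv u := ⟨Groupoid.inv u.l, Groupoid.inv u.r, by
    rw [Groupoid.inv_eq_inv, Groupoid.inv_eq_inv, Functor.map_inv, Functor.map_inv,
      IsIso.inv_comp_eq, ← Category.assoc, IsIso.eq_comp_inv]
    exact u.comm.symm⟩
  inv_comp u := by apply Hom.ext <;> simp [Groupoid.inv_eq_inv]
  comp_inv u := by apply Hom.ext <;> simp [Groupoid.inv_eq_inv]

/-- First projection of the pullback groupoid. -/
def pl (f : S ⥤ B) (g : T ⥤ B) : PB f g ⥤ S where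
  obj x := x.s
  map u := u.l

/-- Second projection of the pullback groupoid. -/
def pr (f : S ⥤ B) (g : T ⥤ B) : PB f g ⥤ T where
  obj x := x.t
  map u := u.r

end PB

/-- The bipullback condition for a cospan of groupoids: every "reindexing problem"
`θ : f s ⟶ g t` has a solution. -/
def BipullbackCond (f : S ⥤ B) (g : T ⥤ B) : Prop :=
  ∀ (s : S) (t : T) (θ : f.obj s ⟶ g.obj t),
    ∃ (s' : S) (t' : T) (φ : s ⟶ s') (ψ : t' ⟶ t) (e : f.obj s' = g.obj t'),
      θ = f.map φ ≫ eqToHom e ≫ g.map ψ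



/-- A prestrategy on a groupoid `A`: a groupoid together with a display functor to `A`. -/
structure Prestrat (A : Type u) [Groupoid.{u} A] : Type (u + 1) where
  C : Type u
  [grpd : Groupoid.{u} C]
  disp : C ⥤ A

attribute [instance] Prestrat.grpd

variable {A B C : Type u} [Groupoid.{u} A] [Groupoid.{u} B] [Groupoid.{u} C]

/-- Uniform orthogonality of prestrategies: the pullback of the display maps is a
bipullback. -/
def Perp (σ τ : Prestrat A) : Prop :=
  BipullbackCond σ.disp τ.disp

/-- The uniform orthogonal of a set of prestrategies. -/
def perpSet (Ss : Set (Prestrat A)) : Set (Prestrat A) :=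
  {τ | ∀ σ ∈ Ss, Perp σ τ}

/-- The identity prestrategy `(A, id_A)` on `A`. -/
def idPre (A : Type u) [Groupoid.{u} A] : Prestrat A :=
  ⟨A, 𝟭 A⟩

/-- The identity span on `A`, as a prestrategy from `A` to `A`. -/
def idSpan (A : Type u) [Groupoid.{u} A] : Prestrat (A × A) :=
  ⟨A, Functor.prod' (𝟭 A) (𝟭 A)⟩

/-- Product of prestrategies. -/
def prodPre (σ : Prestrat A) (τ : Prestrat B) : Prestrat (A × B) :=
  ⟨σ.C × τ.C, σ.disp.prod τ.disp⟩

/-- The left display component of a prestrategy from `A` to `B`. -/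
def dl (σ : Prestrat (A × B)) : σ.C ⥤ A :=
  σ.disp ⋙ CategoryTheory.Prod.fst A B

/-- The right display component of a prestrategy from `A` to `B`. -/
def dr (σ : Prestrat (A × B)) : σ.C ⥤ B :=
  σ.disp ⋙ CategoryTheory.Prod.snd A B

/-- The set `U_{A ⊸ B}` of uniform prestrategies from `(A, UA)` to `(B, UB)`. -/
def ULin (UA : Set (Prestrat A)) (UB : Set (Prestrat B)) : Set (Prestrat (A × B)) :=
  {τ | ∀ σ ∈ UA, ∀ υ ∈ perpSet UB, Perp τ (prodPre σ υ)}

/-- The application `T @ S` of a prestrategy `T` from `A` to `B` to a prestrategy `S`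
on `A`. -/
def appPre (σ : Prestrat A) (τ : Prestrat (A × B)) : Prestrat B :=
  ⟨PB σ.disp (dl τ), PB.pr σ.disp (dl τ) ⋙ dr τ⟩

/-- The composition `T ⊙ S` of spans/prestrategies. -/
def compPre (σ : Prestrat (A × B)) (τ : Prestrat (B × C)) : Prestrat (A × C) :=
  ⟨PB (dr σ) (dl τ),
    Functor.prod' (PB.pl (dr σ) (dl τ) ⋙ dl σ) (PB.pr (dr σ) (dl τ) ⋙ dr τ)⟩

/-- A wide subgroupoid of a groupoid `A`: a class of morphisms containing identities and
closed under composition and inverses (with all objects of `A`). -/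
structure WideSub (A : Type u) [Groupoid.{u} A] : Type u where
  mem : ∀ {a b : A}, (a ⟶ b) → Prop
  id_mem : ∀ a : A, mem (𝟙 a)
  comp_mem : ∀ {a b c : A} {f : a ⟶ b} {g : b ⟶ c}, mem f → mem g → mem (f ≫ g)
  inv_mem : ∀ {a b : A} {f : a ⟶ b}, mem f → mem (Groupoid.inv f)

namespace WideSub

/-- The underlying type of objects of a wide subgroupoid (the same objects as `A`). -/
@[ext]
structure Obj {A : Type u} [Groupoid.{u} A] (W : WideSub A) : Type u where
  pt : A

variable {A : Type u} [Groupoid.{u} A] (W : WideSub A)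

instance : Groupoid.{u} W.Obj where
  Hom x y := {f : x.pt ⟶ y.pt // W.mem f}
  id x := ⟨𝟙 x.pt, W.id_mem x.pt⟩
  comp u v := ⟨u.1 ≫ v.1, W.comp_mem u.2 v.2⟩
  id_comp u := Subtype.ext (Category.id_comp u.1)
  comp_id u := Subtype.ext (Category.comp_id u.1)
  assoc u v w := Subtype.ext (Category.assoc u.1 v.1 w.1)
  inv u := ⟨Groupoid.inv u.1, W.inv_mem u.2⟩
  inv_comp u := Subtype.ext (Groupoid.inv_comp u.1)
  comp_inv u := Subtype.ext (Groupoid.comp_inv u.1)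

/-- The inclusion functor of a wide subgroupoid. -/
def incl : W.Obj ⥤ A where
  obj x := x.pt
  map u := u.1

/-- The inclusion of a wide subgroupoid, seen as a prestrategy on `A`. -/
def pre : Prestrat A :=
  ⟨W.Obj, W.incl⟩

end WideSub

/-- A groupoid is discrete when all of its morphisms are identities. -/
def IsDiscreteGpd (P : Type u) [Groupoid.{u} P] : Prop :=
  ∀ {x y : P} (u : x ⟶ y), ∃ h : x = y, u = CategoryTheory.eqToHom h

/-- Thin orthogonality: uniform orthogonality together with discreteness of the
pullback groupoid. -/
def TPerp (σ τ : Prestrat A) : Prop :=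
  Perp σ τ ∧ IsDiscreteGpd (PB σ.disp τ.disp)

/-- The thin orthogonal of a class `Ss` of prestrategies, relative to the ambient
uniform structure `U` (so that the result is a subset of `U ⊥`). -/
def tperpSet (U : Set (Prestrat A)) (Ss : Set (Prestrat A)) : Set (Prestrat A) :=
  {τ | τ ∈ perpSet U ∧ ∀ σ ∈ Ss, TPerp σ τ}

/-- The set `T_{A ⊸ B}` of thin prestrategies (strategies) from a thin groupoid
`(A, A₋, A₊, U_A, T_A)` to `(B, B₋, B₊, U_B, T_B)`. -/
def TLin (UA TA : Set (Prestrat A)) (UB TB : Set (Prestrat B)) :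
    Set (Prestrat (A × B)) :=
  {τ | τ ∈ ULin UA UB ∧ ∀ σ ∈ TA, ∀ υ ∈ tperpSet UB TB, TPerp τ (prodPre σ υ)}

end ThinSpan
namespace ThinSpan

section Aux

variable {A B C : Type u} [Groupoid.{u} A] [Groupoid.{u} B] [Groupoid.{u} C]

theorem prod_eqToHom_fst {X Y : A × B} (h : X = Y) :
    (eqToHom h).1 = eqToHom (congrArg Prod.fst h) := by cases h; rfl

theorem prod_eqToHom_snd {X Y : A × B} (h : X = Y) :
    (eqToHom h).2 = eqToHom (congrArg Prod.snd h) := by cases h; rfl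

theorem perp_idPre (σ : Prestrat A) : Perp σ (idPre A) :=
  fun s b θ => ⟨s, σ.disp.obj s, 𝟙 s, θ, rfl, by simp [idPre]; rfl⟩

theorem idPre_mem_perpSet (Ss : Set (Prestrat A)) : idPre A ∈ perpSet Ss :=
  fun ρ _ => perp_idPre ρ

theorem app_mem_biperp (UA : Set (Prestrat A)) (UB : Set (Prestrat B))
    (σ : Prestrat (A × B)) (hσ : σ ∈ ULin UA UB)
    (S : Prestrat A) (hS : S ∈ UA) :
    appPre S σ ∈ perpSet (perpSet UB) := by
  intro V hV
  intro v y θ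
  obtain ⟨p, s, eqy⟩ := y
  -- θ : V.disp.obj v ⟶ (dr σ).obj s
  obtain ⟨s', pv', φσ, ψ, e, h⟩ :=
    hσ S hS V hV s (p, v)
      ((eqToHom eqy.symm, Groupoid.inv θ) :
        σ.disp.obj s ⟶ (prodPre S V).disp.obj (p, v))
  obtain ⟨p', v'⟩ := pv'
  have eA : (dl σ).obj s' = S.disp.obj p' := congrArg Prod.fst e
  have eB : (dr σ).obj s' = V.disp.obj v' := congrArg Prod.snd e
  have hA : (eqToHom eqy.symm : (dl σ).obj s ⟶ S.disp.obj p)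
      = (dl σ).map φσ ≫ eqToHom eA ≫ S.disp.map ψ.1 := by
    have := congrArg Prod.fst h
    simp [prod_eqToHom_fst] at this; exact this
  have hB : Groupoid.inv θ = (dr σ).map φσ ≫ eqToHom eB ≫ V.disp.map ψ.2 := by
    have := congrArg Prod.snd h
    simp [prod_eqToHom_snd] at this; exact this
  refine ⟨v', ⟨p', s', eA.symm⟩, Groupoid.inv ψ.2,
    ⟨ψ.1, Groupoid.inv φσ, ?_⟩, eB.symm, ?_⟩
  · -- S.disp.map ψ.1 ≫ eqToHom eqy = eqToHom eA.symm ≫ (dl σ).map (Groupoid.inv φσ)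
    have h' : eqToHom eA ≫ S.disp.map ψ.1
        = (dl σ).map (Groupoid.inv φσ) ≫ eqToHom eqy.symm := by
      rw [← cancel_epi ((dl σ).map φσ), ← hA]
      simp [← Functor.map_comp]
    rw [← cancel_epi (eqToHom eA), ← Category.assoc, h']
    simp
  · -- θ = V.disp.map (Groupoid.inv ψ.2) ≫ eqToHom eB.symm ≫ (dr σ).map (Groupoid.inv φσ)
    have hθ : θ = Groupoid.inv ((dr σ).map φσ ≫ eqToHom eB ≫ V.disp.map ψ.2) := by
      rw [← hB]
      exact (fun {X Y : B} (f : X ⟶ Y) => (by simp [Groupoid.inv_eq_inv] : f = Groupoid.inv (Groupoid.inv f))) θ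
    rw [hθ]
    simp [appPre, dr, PB.pr, Groupoid.inv_eq_inv, Functor.map_inv]
    have h2 : (inv (σ.disp.map φσ)).2 ≫ (σ.disp.map φσ).2 = 𝟙 _ :=
      congrArg Prod.snd (IsIso.inv_hom_id (σ.disp.map φσ))
    rw [h2]
    simp
    exact inv_eqToHom eB

end Aux

/-- Composition of uniform prestrategies is uniform. -/
theorem comp_uniform
    {A B C : Type u} [Groupoid.{u} A] [Groupoid.{u} B] [Groupoid.{u} C]
    (UA : Set (Prestrat A)) (UB : Set (Prestrat B)) (UC : Set (Prestrat C))
    (hUA : perpSet (perpSet UA) = UA) (hUB : perpSet (perpSet UB) = UB)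
    (hUC : perpSet (perpSet UC) = UC)
    (σ : Prestrat (A × B)) (τ : Prestrat (B × C))
    (hσ : σ ∈ ULin UA UB) (hτ : τ ∈ ULin UB UC) :
    compPre σ τ ∈ ULin UA UC := by
  intro S hS W hW
  intro x pq θ
  obtain ⟨s, t, heq⟩ := x
  obtain ⟨p, q⟩ := pq
  -- θ.1 : (dl σ).obj s ⟶ S.disp.obj p, θ.2 : (dr τ).obj t ⟶ W.disp.obj q
  -- Step 1: use σ ⊥ S × id_B to get an object of the application σ@S.
  obtain ⟨s₁, pb₁, φ₁, ψ₁, e₁, h₁⟩ :=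
    hσ S hS (idPre B) (idPre_mem_perpSet UB) s (p, (dr σ).obj s)
      ((θ.1, 𝟙 ((dr σ).obj s)) :
        σ.disp.obj s ⟶ (prodPre S (idPre B)).disp.obj (p, (dr σ).obj s))
  obtain ⟨p₁, b₁⟩ := pb₁
  have e₁A : (dl σ).obj s₁ = S.disp.obj p₁ := congrArg Prod.fst e₁
  have h₁A : θ.1 = (dl σ).map φ₁ ≫ eqToHom e₁A ≫ S.disp.map ψ₁.1 := by
    have := congrArg Prod.fst h₁
    simp [prod_eqToHom_fst] at this; exact this
  -- Step 2: σ@S ∈ UB, use τ ⊥ (σ@S) × W.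
  have happ : appPre S σ ∈ UB := by
    rw [← hUB]; exact app_mem_biperp UA UB σ hσ S hS
  obtain ⟨t₂, yq, φ₂, ψ₂, e₂, h₂⟩ :=
    hτ (appPre S σ) happ W hW t ((⟨p₁, s₁, e₁A.symm⟩ : PB S.disp (dl σ)), q)
      ((eqToHom heq.symm ≫ (dr σ).map φ₁, θ.2) :
        τ.disp.obj t ⟶ (prodPre (appPre S σ) W).disp.obj (⟨p₁, s₁, e₁A.symm⟩, q))
  obtain ⟨y₂, q₂⟩ := yq
  obtain ⟨p₂, s₂, eqy₂⟩ := y₂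
  have e₂B : (dl τ).obj t₂ = (dr σ).obj s₂ := congrArg Prod.fst e₂
  have e₂C : (dr τ).obj t₂ = W.disp.obj q₂ := congrArg Prod.snd e₂
  have h₂B : eqToHom heq.symm ≫ (dr σ).map φ₁
      = (dl τ).map φ₂ ≫ eqToHom e₂B ≫ (dr σ).map ψ₂.1.r := by
    have := congrArg Prod.fst h₂
    simp [prod_eqToHom_fst] at this; exact this
  have h₂C : θ.2 = (dr τ).map φ₂ ≫ eqToHom e₂C ≫ W.disp.map ψ₂.2 := by
    have := congrArg Prod.snd h₂
    simp [prod_eqToHom_snd] at this; exact this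
  have hcomm : S.disp.map ψ₂.1.l ≫ eqToHom e₁A.symm = eqToHom eqy₂ ≫ (dl σ).map ψ₂.1.r :=
    ψ₂.1.comm
  have key : (dr σ).map φ₁
      = eqToHom heq ≫ (dl τ).map φ₂ ≫ eqToHom e₂B ≫ (dr σ).map ψ₂.1.r := by
    rw [← h₂B]; simp
  refine ⟨⟨s₂, t₂, e₂B.symm⟩, (p₂, q₂),
    ⟨φ₁ ≫ Groupoid.inv ψ₂.1.r, φ₂, ?_⟩, (ψ₂.1.l ≫ ψ₁.1, ψ₂.2),
    Prod.ext eqy₂.symm e₂C, ?_⟩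
  · -- comm: (dr σ).map (φ₁ ≫ inv ψr) ≫ eqToHom e₂B.symm = eqToHom heq ≫ (dl τ).map φ₂
    rw [Functor.map_comp, key]
    simp [Groupoid.inv_eq_inv, Functor.map_inv]
  · -- componentwise equality of the factorization
    refine Prod.ext ?_ ?_
    · show θ.1 = (dl σ).map (φ₁ ≫ Groupoid.inv ψ₂.1.r)
        ≫ (eqToHom (Prod.ext eqy₂.symm e₂C :
            ((dl σ).obj s₂, (dr τ).obj t₂) = (S.disp.obj p₂, W.disp.obj q₂))).1
        ≫ S.disp.map (ψ₂.1.l ≫ ψ₁.1)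
      rw [prod_eqToHom_fst, h₁A]
      have key2 : S.disp.map ψ₂.1.l = eqToHom eqy₂ ≫ (dl σ).map ψ₂.1.r ≫ eqToHom e₁A := by
        rw [← Category.assoc, ← hcomm]; simp
      rw [Functor.map_comp (dl σ), Functor.map_comp S.disp, key2]
      simp [Groupoid.inv_eq_inv, Functor.map_inv]
      rfl
    · show θ.2 = (dr τ).map φ₂
        ≫ (eqToHom (Prod.ext eqy₂.symm e₂C :
            ((dl σ).obj s₂, (dr τ).obj t₂) = (S.disp.obj p₂, W.disp.obj q₂))).2
        ≫ W.disp.map ψ₂.2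
      rw [prod_eqToHom_snd]
      exact h₂C

end ThinSpan
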